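/- Let G be a TSO game of group II (both players may update exactly before their own moves), let c_0 be a configuration winning for player X via a positional winning strategy σ_X, and let σ̄_X be the flushing modification of σ_X (flush all buffers and then execute the instruction, whenever the move is by a non-read instruction; unchanged on read moves). Let G' be the finite game whose configurations are those configurations of G whose total buffer content has at most max{1, |B(c_0)|} messages (where |B(c_0)| is the total number of buffered messages of c_0), with the restricted transition relation and restricted final set. Then the restriction σ̄'_X of σ̄_X to the X-configurations of G' is a valid strategy of G' and is a winning strategy for player X from c_0 in G'. -/

import Mathlib

namespace TSOGames

/-- The data of a (safety) game: a partition of the configurations into those of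
player A (`isA`) and those of player B, a transition relation, and final configurations. -/
structure SGame (C : Type*) where
  isA : C → Prop
  step : C → C → Prop
  final : C → Prop

namespace SGame

variable {C : Type*} (G : SGame C)

/-- The transition relation alternates between the two players' configurations. -/
def Alternating : Prop := ∀ c c', G.step c c' → (G.isA c ↔ ¬ G.isA c')

/-- Every configuration has at least one successor. -/
def DeadlockFree : Prop := ∀ c, ∃ c', G.step c c'

/-- Final configurations belong to player A. -/
def FinalInA : Prop := ∀ c, G.final c → G.isA c

/-- An (infinite) play: consecutive configurations are related by `step`. -/
def IsPlay (ρ : ℕ → C) : Prop := ∀ i, G.step (ρ i) (ρ (i + 1))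

/-- A (history-dependent) strategy `σ`, given the strict history and the current
configuration, chooses a successor; it is valid for the player owning the
configurations satisfying `own` if it always chooses an actual successor. -/
def ValidStrat (own : C → Prop) (σ : List C → C → C) : Prop :=
  ∀ h c, own c → G.step c (σ h c)

/-- A play is consistent with the strategy `σ` of the player owning the
configurations satisfying `own` if at every such configuration the play follows `σ`. -/
def Consistent (own : C → Prop) (σ : List C → C → C) (ρ : ℕ → C) : Prop :=
  ∀ i, own (ρ i) → ρ (i + 1) = σ (List.ofFn fun j : Fin i => ρ j) (ρ i)

/-- A play is winning for player B if it visits a final configuration. -/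
def BWins (ρ : ℕ → C) : Prop := ∃ i, G.final (ρ i)

/-- A play is winning for player A if it never visits a final configuration. -/
def AWinsPlay (ρ : ℕ → C) : Prop := ¬ G.BWins ρ

/-- `σ` is a winning strategy from `c0` for the player owning the configurations
satisfying `own`, whose plays are winning when they satisfy `winPlay`:
it is valid and every play from `c0` consistent with it is winning. -/
def WinningStrat (own : C → Prop) (winPlay : (ℕ → C) → Prop)
    (σ : List C → C → C) (c0 : C) : Prop :=
  G.ValidStrat own σ ∧
    ∀ ρ : ℕ → C, ρ 0 = c0 → G.IsPlay ρ → Consistent own σ ρ → winPlay ρ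

/-- The given player has a winning strategy from `c0`. -/
def Wins (own : C → Prop) (winPlay : (ℕ → C) → Prop) (c0 : C) : Prop :=
  ∃ σ, G.WinningStrat own winPlay σ c0

/-- `c0` is winning for player A. -/
def WinA (c0 : C) : Prop := G.Wins (fun c => G.isA c) G.AWinsPlay c0

/-- `c0` is winning for player B. -/
def WinB (c0 : C) : Prop := G.Wins (fun c => ¬ G.isA c) G.BWins c0

end SGame

/-- Restriction of a game to a subset `D` of its configurations. -/
def restrictGame {C : Type*} (G : SGame C) (D : Set C) : SGame C where
  isA := G.isA
  step := fun c c' => G.step c c' ∧ c ∈ D ∧ c' ∈ D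
  final := fun c => G.final c ∧ c ∈ D

/-- The winning condition on plays for the player encoded by `b` (`true` = player A,
who wins a play iff it avoids the final configurations; `false` = player B). -/
def winPlayOf {C : Type*} (G : SGame C) (b : Bool) : (ℕ → C) → Prop :=
  fun ρ => if b then ¬ G.BWins ρ else G.BWins ρ

end TSOGames
namespace TSOGames

/-- TSO instructions: read, write, skip, and memory fence. -/
inductive Instr (X V : Type*) : Type _
  | read (x : X) (v : V)
  | write (x : X) (v : V)
  | skip
  | fence

/-- Whether an instruction is a read instruction. -/
def Instr.isRead {X V : Type*} : Instr X V → Bool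
  | .read _ _ => true
  | _ => false

/-- A concurrent program: a family of processes indexed by `I`, each a transition
system over local states `S` labeled by instructions over variables `X` and values `V`. -/
structure Program (I S X V : Type*) where
  delta : I → S → Instr X V → S → Prop

/-- A TSO configuration: local states, per-process FIFO store buffers
(newest message at the head, oldest at the end), and the shared memory. -/
structure Conf (I S X V : Type*) where
  st : I → S
  buf : I → List (X × V)
  mem : X → V

section TSO

variable {I S X V : Type*}

/-- The value of the most recent buffered write on `x`, if any
(the buffer stores the newest message first). -/
def bufVal [DecidableEq X] : List (X × V) → X → Option V
  | [], _ => none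
  | (y, v) :: rest, x => if y = x then some v else bufVal rest x

/-- The value process `ι` reads from variable `x`: the most recent buffered write of
`ι` on `x` if there is one, and the memory value otherwise. -/
def readVal [DecidableEq X] (c : Conf I S X V) (ι : I) (x : X) : V :=
  (bufVal (c.buf ι) x).getD (c.mem x)

variable [DecidableEq I] [DecidableEq X]

/-- Execution of one instruction by process `ι` under TSO semantics. -/
inductive InstrStep (P : Program I S X V) (ι : I) (instr : Instr X V) :
    Conf I S X V → Conf I S X V → Prop
  | read (c : Conf I S X V) (x : X) (v : V) (s' : S) :
      instr = Instr.read x v → P.delta ι (c.st ι) (Instr.read x v) s' →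
      readVal c ι x = v →
      InstrStep P ι instr c ⟨Function.update c.st ι s', c.buf, c.mem⟩
  | write (c : Conf I S X V) (x : X) (v : V) (s' : S) :
      instr = Instr.write x v → P.delta ι (c.st ι) (Instr.write x v) s' →
      InstrStep P ι instr c
        ⟨Function.update c.st ι s', Function.update c.buf ι ((x, v) :: c.buf ι), c.mem⟩
  | skip (c : Conf I S X V) (s' : S) :
      instr = Instr.skip → P.delta ι (c.st ι) Instr.skip s' →
      InstrStep P ι instr c ⟨Function.update c.st ι s', c.buf, c.mem⟩
  | fence (c : Conf I S X V) (s' : S) :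
      instr = Instr.fence → P.delta ι (c.st ι) Instr.fence s' → c.buf ι = [] →
      InstrStep P ι instr c ⟨Function.update c.st ι s', c.buf, c.mem⟩

/-- An update step: the oldest buffered message of some process is committed to memory. -/
inductive UpdStep : Conf I S X V → Conf I S X V → Prop
  | mk (c : Conf I S X V) (ι : I) (x : X) (v : V) (w : List (X × V)) :
      c.buf ι = w ++ [(x, v)] →
      UpdStep c ⟨c.st, Function.update c.buf ι w, Function.update c.mem x v⟩

/-- Finitely many update steps. -/
def Upds : Conf I S X V → Conf I S X V → Prop := Relation.ReflTransGen UpdStep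

/-- `flush` maps every configuration `c` to the configuration `c̄` obtained by
updating all buffered messages to the memory: `c →up* c̄` and all buffers of `c̄` are empty. -/
def IsFlush (flush : Conf I S X V → Conf I S X V) : Prop :=
  ∀ c, Upds c (flush c) ∧ ∀ ι, (flush c).buf ι = []

/-- Update steps by a player, if she is allowed to perform them (otherwise nothing happens). -/
def OptUpds (allowed : Bool) (c c' : Conf I S X V) : Prop :=
  if allowed then Upds c c' else c' = c

/-- A move of a player whose permissions to update before resp. after her move are
given by `perm`: optional updates before, one instruction, optional updates after. -/
def Move (P : Program I S X V) (perm : Bool × Bool) (c c' : Conf I S X V) : Prop :=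
  ∃ c1 c2, OptUpds perm.1 c c1 ∧ (∃ ι instr, InstrStep P ι instr c1 c2) ∧
    OptUpds perm.2 c2 c'

/-- The TSO game induced by a program `P`, update permissions
`permA`/`permB` = (may update before her move, may update after her move)
for players A and B, and a set `SF` of final local states. Game configurations are
TSO configurations annotated by `true` (player A's) or `false` (player B's). -/
def tsoGame (P : Program I S X V) (permA permB : Bool × Bool) (SF : Set S) :
    SGame (Conf I S X V × Bool) where
  isA := fun c => c.2 = true
  step := fun c c' =>
    (c.2 = true ∧ c'.2 = false ∧ Move P permA c.1 c'.1) ∨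
    (c.2 = false ∧ c'.2 = true ∧ Move P permB c.1 c'.1)
  final := fun c => c.2 = true ∧ ∃ ι, c.1.st ι ∈ SF

/-- The configurations owned by the player encoded by `b` (`true` = player A). -/
def ownOf (b : Bool) : Conf I S X V × Bool → Prop := fun c => c.2 = b

/-- The total number of buffered messages of a configuration. -/
def totalBuf [Fintype I] (c : Conf I S X V) : ℕ := ∑ ι, (c.buf ι).length

end TSO

end TSOGames
namespace TSOGames

variable {I S X V : Type*} [DecidableEq I] [DecidableEq X]

/-- `σbar` is the flushing modification of the positional strategy `σX` of the player
encoded by `xIsA`: at each of her configurations `c` with `σX c = c'`, if some non-read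
instruction transition leads from `c` to `c'`, then `σbar c` is obtained by first
flushing all buffers of `c` and then executing such an instruction (so that
`c' →up* σbar c`); otherwise (the move is only possible via a read) `σbar c = σX c`. -/
def IsFlushMod (P : Program I S X V) (flush : Conf I S X V → Conf I S X V)
    (xIsA : Bool) (σX σbar : Conf I S X V × Bool → Conf I S X V × Bool) : Prop :=
  ∀ c : Conf I S X V × Bool, c.2 = xIsA →
    ((∃ ι instr, Instr.isRead instr = false ∧ InstrStep P ι instr c.1 (σX c).1) →
      (∃ ι instr, Instr.isRead instr = false ∧ InstrStep P ι instr (flush c.1) (σbar c).1) ∧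
        Upds (σX c).1 (σbar c).1 ∧ (σbar c).2 = (σX c).2) ∧
    ((¬ ∃ ι instr, Instr.isRead instr = false ∧ InstrStep P ι instr c.1 (σX c).1) →
      σbar c = σX c)

end TSOGames

/-!
Two facts about group II carry the proof. First, a move of the form "updates, then a read"
never increases the total buffer content, and a move that starts from a flushed configuration
leaves at most one message; so the flushing modification never leaves the bounded game.
Second, since a player may update before her move, any move available from `d` is also available
from a configuration `c` with `c →up* d`. Given a play consistent with `σbar`, replay it with `σX`
at the X-configurations and copy the opponent's moves: the resulting shadow play is consistent
with `σX`, hence winning, and at every position it lags behind the original one by update steps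
only, which change neither the local states nor the owner.
-/

namespace TSOGames

namespace SGame

variable {C : Type*} (G : SGame C)

def shadowPlay (own : C → Prop) [DecidablePred own] (σ : C → C) (ρ : ℕ → C) : ℕ → C
  | 0 => ρ 0
  | j + 1 => if own (ρ j) then σ (ρ j) else ρ (j + 1)

section Shadow

variable {own : C → Prop} {R : C → C → Prop} {σ τ : C → C}

lemma shadowPlay_spec [DecidablePred own] (hturn : ∀ c d, G.step c d → own c → ¬ own d)
    (hrefl : ∀ c, R c c) (hτ : ∀ c, own c → R (σ c) (τ c)) {ρ : ℕ → C} (hρ : G.IsPlay ρ)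
    (hcons : Consistent own (fun _ => τ) ρ) (i : ℕ) :
    R (shadowPlay own σ ρ i) (ρ i) ∧ (own (ρ i) → shadowPlay own σ ρ i = ρ i) := by
  cases i with
  | zero => exact ⟨hrefl _, fun _ => rfl⟩
  | succ j =>
    by_cases hj : own (ρ j)
    · have hj1 : shadowPlay own σ ρ (j + 1) = σ (ρ j) := if_pos hj
      refine ⟨?_, fun hj' => absurd hj' (hturn _ _ (hρ j) hj)⟩
      rw [hj1, hcons j hj]
      exact hτ _ hj
    · have hj1 : shadowPlay own σ ρ (j + 1) = ρ (j + 1) := if_neg hj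
      exact ⟨hj1 ▸ hrefl _, fun _ => hj1⟩

theorem winPlayOf_of_shadow {b : Bool} {c0 : C}
    (hwin : G.WinningStrat own (winPlayOf G b) (fun _ => σ) c0)
    (hturn : ∀ c d, G.step c d → own c → ¬ own d) (hrefl : ∀ c, R c c)
    (hown : ∀ c d, R c d → (own c ↔ own d)) (hfinal : ∀ c d, R c d → (G.final c ↔ G.final d))
    (hτ : ∀ c, own c → R (σ c) (τ c))
    (hopp : ∀ c d e, R c d → ¬ own d → G.step d e → G.step c e)
    {ρ : ℕ → C} (hρ0 : ρ 0 = c0) (hρ : G.IsPlay ρ) (hcons : Consistent own (fun _ => τ) ρ) :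
    winPlayOf G b ρ := by
  classical
  have hspec := G.shadowPlay_spec hturn hrefl hτ hρ hcons
  set ρ' := shadowPlay own σ ρ
  have hplay' : G.IsPlay ρ' := by
    intro i
    by_cases hi : own (ρ i)
    · rw [(hspec i).2 hi, show ρ' (i + 1) = σ (ρ i) from if_pos hi]
      exact hwin.1 [] _ hi
    · rw [show ρ' (i + 1) = ρ (i + 1) from if_neg hi]
      exact hopp _ _ _ (hspec i).1 hi (hρ i)
  have hcons' : Consistent own (fun _ => σ) ρ' := by
    intro i hi
    have hi' : own (ρ i) := (hown _ _ (hspec i).1).1 hi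
    rw [(hspec i).2 hi']
    exact if_pos hi'
  have hwin' := hwin.2 ρ' hρ0 hplay' hcons'
  have hB : G.BWins ρ' ↔ G.BWins ρ := exists_congr fun i => hfinal _ _ (hspec i).1
  unfold winPlayOf at hwin' ⊢
  rwa [hB] at hwin'

end Shadow

end SGame

section Restrict

variable {C : Type*} {G : SGame C} {D : Set C}

lemma winPlayOf_restrictGame_iff {ρ : ℕ → C} (hD : ∀ i, ρ i ∈ D) (b : Bool) :
    winPlayOf (restrictGame G D) b ρ ↔ winPlayOf G b ρ := by
  have hB : (restrictGame G D).BWins ρ ↔ G.BWins ρ :=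
    exists_congr fun i => and_iff_left (hD i)
  unfold winPlayOf
  rw [hB]

theorem winningStrat_restrictGame {own : C → Prop} {b : Bool} {τ : List C → C → C} {c0 : C}
    (hvalid : ∀ h c, own c → c ∈ D → G.step c (τ h c) ∧ τ h c ∈ D)
    (hwin : ∀ ρ, ρ 0 = c0 → G.IsPlay ρ → (∀ i, ρ i ∈ D) → SGame.Consistent own τ ρ →
      winPlayOf G b ρ) :
    (restrictGame G D).WinningStrat (fun c => own c ∧ c ∈ D) (winPlayOf (restrictGame G D) b)
      τ c0 := by
  refine ⟨fun h c ⟨hc, hcD⟩ => ?_, fun ρ hρ0 hρ hcons => ?_⟩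
  · obtain ⟨hstep, hD'⟩ := hvalid h c hc hcD
    exact ⟨hstep, hcD, hD'⟩
  · have hD : ∀ i, ρ i ∈ D := fun i => (hρ i).2.1
    rw [winPlayOf_restrictGame_iff hD]
    exact hwin ρ hρ0 (fun i => (hρ i).1) hD fun i hi => hcons i ⟨hi, hD i⟩

end Restrict

variable {I S X V : Type*}

section Buffers

lemma totalBuf_update_add_length [Fintype I] [DecidableEq I] (c : Conf I S X V) (st : I → S)
    (mem : X → V) (ι : I) (l : List (X × V)) :
    totalBuf ⟨st, Function.update c.buf ι l, mem⟩ + (c.buf ι).length =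
      totalBuf c + l.length := by
  have hrest : ∑ j ∈ Finset.univ.erase ι, (Function.update c.buf ι l j).length
      = ∑ j ∈ Finset.univ.erase ι, (c.buf j).length :=
    Finset.sum_congr rfl fun j hj => by rw [Function.update_of_ne (Finset.ne_of_mem_erase hj)]
  unfold totalBuf
  rw [← Finset.add_sum_erase _ _ (Finset.mem_univ ι),
    ← Finset.add_sum_erase _ _ (Finset.mem_univ ι), hrest]
  dsimp only
  rw [Function.update_self]
  omega

variable [DecidableEq I] [DecidableEq X]

lemma UpdStep.st_eq {c c' : Conf I S X V} (h : UpdStep c c') : c'.st = c.st := by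
  cases h; rfl

lemma Upds.st_eq {c c' : Conf I S X V} (h : Upds c c') : c'.st = c.st := by
  induction h with
  | refl => rfl
  | tail _ hstep ih => exact hstep.st_eq.trans ih

lemma InstrStep.buf_eq_of_isRead {P : Program I S X V} {ι : I} {instr : Instr X V}
    {c c' : Conf I S X V} (h : InstrStep P ι instr c c') (hr : instr.isRead = true) :
    c'.buf = c.buf := by
  cases h with
  | read => rfl
  | write x v _ he | skip _ he | fence _ he => subst he; cases hr

variable [Fintype I]

lemma totalBuf_eq_zero_of_isFlush {flush : Conf I S X V → Conf I S X V} (hflush : IsFlush flush)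
    (c : Conf I S X V) : totalBuf (flush c) = 0 := by
  simp [totalBuf, (hflush c).2]

lemma UpdStep.totalBuf_add_one {c c' : Conf I S X V} (h : UpdStep c c') :
    totalBuf c' + 1 = totalBuf c := by
  obtain ⟨ι, x, v, w, hb⟩ := h
  have := totalBuf_update_add_length c c.st (Function.update c.mem x v) ι w
  rw [hb, List.length_append, List.length_singleton] at this
  omega

lemma Upds.totalBuf_le {c c' : Conf I S X V} (h : Upds c c') : totalBuf c' ≤ totalBuf c := by
  induction h with
  | refl => rfl
  | tail _ hstep ih => have := hstep.totalBuf_add_one; omega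

lemma Upds.eq_or_totalBuf_lt {c c' : Conf I S X V} (h : Upds c c') :
    c = c' ∨ totalBuf c' < totalBuf c := by
  rcases Relation.ReflTransGen.cases_head h with rfl | ⟨d, hcd, hdc'⟩
  · exact Or.inl rfl
  · have := hcd.totalBuf_add_one; have := Upds.totalBuf_le hdc'; omega

lemma InstrStep.totalBuf_le {P : Program I S X V} {ι : I} {instr : Instr X V}
    {c c' : Conf I S X V} (h : InstrStep P ι instr c c') : totalBuf c' ≤ totalBuf c + 1 := by
  cases h with
  | read | skip | fence => exact Nat.le_succ _
  | write x v s' =>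
    have := totalBuf_update_add_length c (Function.update c.st ι s') c.mem ι ((x, v) :: c.buf ι)
    rw [List.length_cons] at this
    omega

/-- Either the move is a bare read, or an update precedes the instruction and makes room for
the message it may write. -/
lemma Move.totalBuf_le {P : Program I S X V} {u : Bool} {c c' : Conf I S X V}
    (hm : Move P (u, false) c c')
    (hnr : ¬ ∃ ι instr, instr.isRead = false ∧ InstrStep P ι instr c c') :
    totalBuf c' ≤ totalBuf c := by
  obtain ⟨c1, c2, hbefore, ⟨ι, instr, hi⟩, rfl : c' = c2⟩ := hm
  have hupd : Upds c c1 := by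
    cases u
    · exact (show c1 = c from hbefore) ▸ Relation.ReflTransGen.refl
    · exact hbefore
  rcases hupd.eq_or_totalBuf_lt with rfl | hlt
  · cases hr : instr.isRead
    · exact absurd ⟨ι, instr, hr, hi⟩ hnr
    · unfold totalBuf; rw [hi.buf_eq_of_isRead hr]
  · have := hi.totalBuf_le; omega

end Buffers

variable [DecidableEq I] [DecidableEq X]

lemma tsoGame_step_iff (P : Program I S X V) (p : Bool × Bool) (SF : Set S)
    (c c' : Conf I S X V × Bool) :
    (tsoGame P p p SF).step c c' ↔ c.2 = !c'.2 ∧ Move P p c.1 c'.1 := by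
  obtain ⟨c, b⟩ := c; obtain ⟨c', b'⟩ := c'
  cases b <;> cases b' <;> simp [tsoGame]

lemma Move.of_upds {P : Program I S X V} {u : Bool} {c d c' : Conf I S X V}
    (hcd : Upds c d) (hm : Move P (true, u) d c') : Move P (true, u) c c' := by
  obtain ⟨c1, c2, hbefore, hi, hafter⟩ := hm
  exact ⟨c1, c2, hcd.trans hbefore, hi, hafter⟩

def GameUpds (c d : Conf I S X V × Bool) : Prop := Upds c.1 d.1 ∧ c.2 = d.2

lemma tsoGame_step_of_gameUpds {P : Program I S X V} {u : Bool} {SF : Set S}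
    {c d e : Conf I S X V × Bool} (hcd : GameUpds c d)
    (hde : (tsoGame P (true, u) (true, u) SF).step d e) :
    (tsoGame P (true, u) (true, u) SF).step c e := by
  obtain ⟨hb, hm⟩ := (tsoGame_step_iff P _ SF d e).1 hde
  exact (tsoGame_step_iff P _ SF c e).2 ⟨hcd.2.trans hb, hm.of_upds hcd.1⟩

section FlushMod

variable {P : Program I S X V} {flush : Conf I S X V → Conf I S X V} {xIsA : Bool}
  {σX σbar : Conf I S X V × Bool → Conf I S X V × Bool}

lemma IsFlushMod.gameUpds (hbar : IsFlushMod P flush xIsA σX σbar) {c : Conf I S X V × Bool}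
    (hc : c.2 = xIsA) : GameUpds (σX c) (σbar c) := by
  by_cases hnr : ∃ ι instr, instr.isRead = false ∧ InstrStep P ι instr c.1 (σX c).1
  · obtain ⟨-, hupd, hb⟩ := (hbar c hc).1 hnr
    exact ⟨hupd, hb.symm⟩
  · rw [(hbar c hc).2 hnr]
    exact ⟨Relation.ReflTransGen.refl, rfl⟩

lemma IsFlushMod.step_and_totalBuf_le [Fintype I] {SF : Set S}
    (hflush : IsFlush flush) (hbar : IsFlushMod P flush xIsA σX σbar)
    {c : Conf I S X V × Bool} (hc : c.2 = xIsA)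
    (hstep : (tsoGame P (true, false) (true, false) SF).step c (σX c)) :
    (tsoGame P (true, false) (true, false) SF).step c (σbar c) ∧
      totalBuf (σbar c).1 ≤ max 1 (totalBuf c.1) := by
  obtain ⟨hb, hm⟩ := (tsoGame_step_iff P _ SF _ _).1 hstep
  by_cases hnr : ∃ ι instr, instr.isRead = false ∧ InstrStep P ι instr c.1 (σX c).1
  · obtain ⟨⟨ι, instr, -, hi⟩, -, hb'⟩ := (hbar c hc).1 hnr
    have hmove : Move P (true, false) c.1 (σbar c).1 :=
      ⟨flush c.1, (σbar c).1, (hflush c.1).1, ⟨ι, instr, hi⟩, rfl⟩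
    have := hi.totalBuf_le
    rw [totalBuf_eq_zero_of_isFlush hflush] at this
    exact ⟨(tsoGame_step_iff P _ SF _ _).2 ⟨hb'.symm ▸ hb, hmove⟩, le_max_of_le_left this⟩
  · rw [(hbar c hc).2 hnr]
    exact ⟨hstep, le_max_of_le_right (hm.totalBuf_le hnr)⟩

end FlushMod

/-- Group II, restriction to the finite game `G'` on configurations with at most
`max 1 |B(c0)|` buffered messages: the restriction of the flushing modification `σbar`
to the X-configurations of `G'` is a valid strategy of `G'` and is winning for
player X from `c0` in `G'`. -/
theorem statement9 {I S X V : Type} [DecidableEq I] [DecidableEq X] [Fintype I]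
    (P : Program I S X V) (SF : Set S) (xIsA : Bool)
    (G : SGame (Conf I S X V × Bool))
    (hG : G = tsoGame P (true, false) (true, false) SF)
    (flush : Conf I S X V → Conf I S X V) (hflush : IsFlush flush)
    (c0 : Conf I S X V × Bool)
    (σX σbar : Conf I S X V × Bool → Conf I S X V × Bool)
    (hwin : G.WinningStrat (ownOf xIsA) (winPlayOf G xIsA) (fun _ c => σX c) c0)
    (hbar : IsFlushMod P flush xIsA σX σbar)
    (D : Set (Conf I S X V × Bool))
    (hD : D = {c | totalBuf c.1 ≤ max 1 (totalBuf c0.1)})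
    (G' : SGame (Conf I S X V × Bool)) (hG' : G' = restrictGame G D) :
    G'.WinningStrat (fun c => c.2 = xIsA ∧ c ∈ D) (winPlayOf G' xIsA)
      (fun _ c => σbar c) c0 := by
  subst hG hD hG'
  refine winningStrat_restrictGame (fun _ c hc hcD => ?_) fun ρ hρ0 hρ _ hcons => ?_
  · obtain ⟨hstep, hle⟩ := hbar.step_and_totalBuf_le hflush hc (hwin.1 [] c hc)
    exact ⟨hstep, hle.trans (max_le (le_max_left _ _) hcD)⟩
  · refine SGame.winPlayOf_of_shadow _ hwin (R := GameUpds) ?turn ?refl ?own ?final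
      (fun _ hc => hbar.gameUpds hc) (fun _ _ _ hcd _ => tsoGame_step_of_gameUpds hcd)
      hρ0 hρ hcons
    case turn =>
      intro c d hcd hc hd
      have := ((tsoGame_step_iff P _ SF c d).1 hcd).1
      simp_all [ownOf]
    case refl => exact fun c => ⟨Relation.ReflTransGen.refl, rfl⟩
    case own => exact fun c d hcd => by simp only [ownOf, hcd.2]
    case final =>
      intro c d hcd
      simp only [tsoGame, hcd.2, hcd.1.st_eq]

end TSOGames
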